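/- arXiv:0905.2370 — 5 statements merged into one kernel-verified Lean document; each statement's English description precedes it below -/
import Mathlib

section
/- (Wiener's lemma consequence) For a finite continuous (atomless) Borel measure μ on the unit circle, there exists a set A of natural numbers of natural density 1 such that the Fourier coefficients μ̂(k) = ∫ z^k dμ(z) tend to 0 as k → ∞ along A. -/
open MeasureTheory Filter

noncomputable instance : MeasurableSpace Circle := borel Circle
instance : BorelSpace Circle := ⟨rfl⟩

def HasDensityOne (A : Set ℕ) : Prop :=
  Tendsto (fun N : ℕ => (Nat.card ↑(A ∩ Set.Iio N) : ℝ) / N) atTop (nhds 1)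

open Finset Topology ComplexConjugate

/-!
Wiener: `(1/N) ∑_{k<N} |μ̂(k)|² = ∫∫ (1/N) ∑_{k<N} (z/w)^k dμ(z) dμ(w)`. The integrand is bounded by
`1` and tends to `0` off the diagonal `z = w`, which is `μ ⊗ μ`-null because `μ` has no atoms, so
the Cesàro means of `|μ̂|²` tend to `0` by dominated convergence.

Koopman–von Neumann: if `a ≥ 0` has Cesàro means `m n → 0`, choose a positive antitone `r → 0` with
`m n / r n → 0`. By Markov's inequality at most `n m n / r n = o(n)` of the `k < n` have
`a k ≥ r k ≥ r n`, so `{k | a k < r k}` has density one, and `a → 0` along it.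
-/

lemma Nat.exists_monotone_tendsto_atTop_forall_le (T : ℕ → ℕ) :
    ∃ J : ℕ → ℕ, Monotone J ∧ Tendsto J atTop atTop ∧ ∀ n ≥ T 0, T (J n) ≤ n := by
  classical
  refine ⟨fun n => Nat.findGreatest (fun j => T j ≤ n) n,
    fun m n hmn => Nat.findGreatest_mono (fun j hj => hj.trans hmn) hmn,
    tendsto_atTop_atTop.2 fun m => ⟨max m (T m), fun n hn => ?_⟩,
    fun n hn => Nat.findGreatest_spec (P := fun j => T j ≤ n) (zero_le n) hn⟩
  exact Nat.le_findGreatest (le_of_max_le_left hn) (le_of_max_le_right hn)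

lemma exists_antitone_tendsto_zero_div_tendsto_zero {u : ℕ → ℝ}
    (hu : Tendsto u atTop (𝓝 0)) :
    ∃ r : ℕ → ℝ, Antitone r ∧ (∀ n, 0 < r n) ∧ Tendsto r atTop (𝓝 0) ∧
      Tendsto (fun n => u n / r n) atTop (𝓝 0) := by
  have hu' : ∀ m : ℕ, ∀ᶠ n in atTop, ‖u n‖ ≤ (1 / ((m : ℝ) + 1)) ^ 2 := fun m =>
    (tendsto_zero_iff_norm_tendsto_zero.1 hu).eventually_le_const (by positivity)
  choose T hT using fun m => eventually_atTop.1 (hu' m)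
  -- `r n = 1 / (J n + 1)` with `T (J n) ≤ n` gives `|u n| ≤ r n ^ 2`.
  obtain ⟨J, hJ_mono, hJ_top, hTJ⟩ := Nat.exists_monotone_tendsto_atTop_forall_le T
  have hr : Tendsto (fun n => 1 / ((J n : ℝ) + 1)) atTop (𝓝 0) :=
    tendsto_one_div_add_atTop_nhds_zero_nat.comp hJ_top
  refine ⟨fun n => 1 / ((J n : ℝ) + 1), fun m n hmn => ?_, fun n => by positivity, hr, ?_⟩
  · dsimp only
    gcongr
    exact hJ_mono hmn
  · refine squeeze_zero_norm' ?_ hr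
    filter_upwards [eventually_ge_atTop (T 0)] with n hn
    have hJ : (0 : ℝ) < 1 / ((J n : ℝ) + 1) := by positivity
    rw [norm_div, Real.norm_of_nonneg hJ.le, div_le_iff₀ hJ, ← sq]
    exact hT (J n) n (hTJ n hn)

lemma Finset.card_filter_le_mul_le_sum {ι : Type*} {s : Finset ι} {a : ι → ℝ}
    (ha : ∀ i ∈ s, 0 ≤ a i) (c : ℝ) [DecidablePred fun i => c ≤ a i] :
    #{i ∈ s | c ≤ a i} * c ≤ ∑ i ∈ s, a i :=
  calc #{i ∈ s | c ≤ a i} * c = #{i ∈ s | c ≤ a i} • c := (nsmul_eq_mul _ _).symm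
    _ ≤ ∑ i ∈ s with c ≤ a i, a i := card_nsmul_le_sum _ _ _ fun _ hi => (mem_filter.1 hi).2
    _ ≤ ∑ i ∈ s, a i :=
      sum_le_sum_of_subset_of_nonneg (filter_subset _ _) fun i hi _ => ha i hi

lemma hasDensityOne_of_tendsto_card_compl {A : Set ℕ} [DecidablePred (· ∈ A)]
    (h : Tendsto (fun n : ℕ => (#{k ∈ range n | k ∉ A} : ℝ) / n) atTop (𝓝 0)) :
    HasDensityOne A := by
  have hcard (n : ℕ) : (Nat.card ↑(A ∩ Set.Iio n) : ℝ) = n - #{k ∈ range n | k ∉ A} := by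
    have hA : A ∩ Set.Iio n = ↑({k ∈ range n | k ∈ A}) := by ext k; simp [and_comm]
    rw [Nat.card_coe_set_eq, hA, Set.ncard_coe_finset, eq_sub_iff_add_eq]
    exact_mod_cast (card_range n ▸ card_filter_add_card_filter_not (s := range n) (· ∈ A))
  have h1 : Tendsto (fun n : ℕ => 1 - (#{k ∈ range n | k ∉ A} : ℝ) / n) atTop (𝓝 1) := by
    simpa using h.const_sub 1
  refine h1.congr' ?_
  filter_upwards [eventually_ne_atTop 0] with n hn
  rw [hcard, sub_div, div_self (Nat.cast_ne_zero.2 hn)]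

theorem exists_hasDensityOne_tendsto_zero_of_cesaro {a : ℕ → ℝ} (ha : ∀ k, 0 ≤ a k)
    (hc : Tendsto (fun n : ℕ => (∑ k ∈ range n, a k) / n) atTop (𝓝 0)) :
    ∃ A : Set ℕ, HasDensityOne A ∧ Tendsto a (atTop ⊓ 𝓟 A) (𝓝 0) := by
  classical
  obtain ⟨r, hr_anti, hr_pos, hr, hcr⟩ := exists_antitone_tendsto_zero_div_tendsto_zero hc
  refine ⟨{k | a k < r k}, hasDensityOne_of_tendsto_card_compl ?_, ?_⟩
  · refine squeeze_zero (fun n => by positivity) (fun n => ?_) hcr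
    have hsub : {k ∈ range n | k ∉ {k | a k < r k}} ⊆ {k ∈ range n | r n ≤ a k} :=
      monotone_filter_right _ fun k hk hkA =>
        (hr_anti (mem_range.1 hk).le).trans (not_lt.1 hkA)
    have hmarkov := card_filter_le_mul_le_sum (s := range n) (fun k _ => ha k) (r n)
    calc (#{k ∈ range n | k ∉ {k | a k < r k}} : ℝ) / n
        ≤ #{k ∈ range n | r n ≤ a k} / n := by gcongr
      _ ≤ (∑ k ∈ range n, a k) / r n / n := by
          gcongr; exact (le_div_iff₀ (hr_pos n)).2 hmarkov
      _ = (∑ k ∈ range n, a k) / n / r n := div_right_comm _ _ _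
  · exact tendsto_of_tendsto_of_tendsto_of_le_of_le' tendsto_const_nhds
      (hr.mono_left inf_le_left) (Eventually.of_forall ha)
      (eventually_inf_principal.2 (Eventually.of_forall fun _ hk => le_of_lt hk))

section GeomSum

variable {𝕜 : Type*} [RCLike 𝕜] {w : 𝕜}

lemma norm_cesaro_geom_sum_le_one (hw : ‖w‖ ≤ 1) (N : ℕ) :
    ‖(N : 𝕜)⁻¹ * ∑ k ∈ range N, w ^ k‖ ≤ 1 := by
  rcases N.eq_zero_or_pos with rfl | hN
  · simp
  rw [norm_mul, norm_inv, RCLike.norm_natCast, inv_mul_le_one₀ (by positivity)]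
  calc ‖∑ k ∈ range N, w ^ k‖ ≤ ∑ k ∈ range N, ‖w‖ ^ k :=
        norm_sum_le_of_le _ fun k _ => norm_pow_le _ _
    _ ≤ ∑ k ∈ range N, 1 := sum_le_sum fun k _ => pow_le_one₀ (norm_nonneg _) hw
    _ = N := by simp

lemma tendsto_cesaro_geom_sum_zero (hw : ‖w‖ ≤ 1) (hw1 : w ≠ 1) :
    Tendsto (fun N : ℕ => (N : 𝕜)⁻¹ * ∑ k ∈ range N, w ^ k) atTop (𝓝 0) := by
  have hbound (N : ℕ) :
      ‖(N : 𝕜)⁻¹ * ∑ k ∈ range N, w ^ k‖ ≤ (N : ℝ)⁻¹ * (2 / ‖w - 1‖) := by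
    have hnum : ‖w ^ N - 1‖ ≤ 2 := calc
      ‖w ^ N - 1‖ ≤ ‖w‖ ^ N + ‖(1 : 𝕜)‖ := (norm_sub_le _ _).trans (by rw [norm_pow])
      _ ≤ 2 := by rw [norm_one]; linarith [pow_le_one₀ (norm_nonneg w) hw (n := N)]
    rw [geom_sum_eq hw1, norm_mul, norm_inv, RCLike.norm_natCast, norm_div]
    gcongr
  refine squeeze_zero_norm hbound ?_
  simpa using (tendsto_inv_atTop_nhds_zero_nat (𝕜 := ℝ)).mul_const (2 / ‖w - 1‖)

end GeomSum

lemma MeasureTheory.Measure.ae_prod_ne {α : Type*} [MeasurableSpace α] [MeasurableEq α]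
    (μ ν : Measure α) [SFinite ν] [NullSingletonClass ν] : ∀ᵐ p ∂μ.prod ν, p.1 ≠ p.2 := by
  have hfiber (x : α) : Prod.mk x ⁻¹' Set.diagonal α = {x} := by ext; simp [eq_comm]
  simp only [ae_iff, not_not]
  rw [← Set.diagonal, Measure.prod_apply measurableSet_diagonal]
  simp [hfiber]

lemma Circle.sq_norm_integral_pow_eq_integral_prod (μ : Measure Circle) [SFinite μ] (k : ℕ) :
    ((‖∫ z : Circle, (z : ℂ) ^ k ∂μ‖ ^ 2 : ℝ) : ℂ) =
      ∫ p : Circle × Circle, ((p.1 / p.2 : Circle) : ℂ) ^ k ∂μ.prod μ := by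
  have hconj :
      conj (∫ z : Circle, (z : ℂ) ^ k ∂μ) = ∫ z : Circle, ((z⁻¹ : Circle) : ℂ) ^ k ∂μ := by
    rw [← integral_conj]
    congr 1 with z
    rw [map_pow, Circle.coe_inv_eq_conj]
  rw [Complex.ofReal_pow, ← Complex.mul_conj', hconj, ← integral_prod_mul]
  congr 1 with p
  rw [Circle.coe_div, div_eq_mul_inv, mul_pow, Circle.coe_inv]

theorem Circle.tendsto_cesaro_norm_sq_integral_pow (μ : Measure Circle) [IsFiniteMeasure μ]
    [NullSingletonClass μ] :
    Tendsto (fun N : ℕ => (∑ k ∈ range N, ‖∫ z : Circle, (z : ℂ) ^ k ∂μ‖ ^ 2) / N)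
      atTop (𝓝 0) := by
  set F : ℕ → Circle × Circle → ℂ :=
    fun N p => (N : ℂ)⁻¹ * ∑ k ∈ range N, ((p.1 / p.2 : Circle) : ℂ) ^ k
  have hcont (k : ℕ) :
      Continuous fun p : Circle × Circle => ((p.1 / p.2 : Circle) : ℂ) ^ k := by
    have hcoe : Continuous ((↑) : Circle → ℂ) := continuous_subtype_val
    exact (hcoe.comp (continuous_div' (G := Circle))).pow k
  have hF_integral (N : ℕ) : ∫ p, F N p ∂μ.prod μ =
      (((∑ k ∈ range N, ‖∫ z : Circle, (z : ℂ) ^ k ∂μ‖ ^ 2) / N : ℝ) : ℂ) := by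
    have hint (k : ℕ) : Integrable (fun p : Circle × Circle => ((p.1 / p.2 : Circle) : ℂ) ^ k)
        (μ.prod μ) :=
      (hcont k).integrable_of_hasCompactSupport (HasCompactSupport.of_compactSpace _)
    simp_rw [F, integral_const_mul, integral_finsetSum _ fun k _ => hint k,
      ← Circle.sq_norm_integral_pow_eq_integral_prod]
    push_cast
    ring
  have hF_lim : Tendsto (fun N => ∫ p, F N p ∂μ.prod μ) atTop (𝓝 0) := by
    simpa only [integral_zero] using tendsto_integral_of_dominated_convergence (F := F)
      (f := fun _ => 0) (fun _ => (1 : ℝ))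
      (fun N => (continuous_const.mul
        (continuous_finsetSum _ fun k _ => hcont k)).aestronglyMeasurable)
      (integrable_const 1)
      (fun N => Eventually.of_forall fun _ => norm_cesaro_geom_sum_le_one (Circle.norm_coe _).le N)
      (by filter_upwards [Measure.ae_prod_ne μ μ] with p hp
          exact tendsto_cesaro_geom_sum_zero (Circle.norm_coe _).le
            (by rwa [ne_eq, Circle.coe_eq_one, div_eq_one]))
  simp_rw [hF_integral] at hF_lim
  simpa only [Function.comp_def, Complex.ofReal_re, Complex.zero_re] using
    (Complex.continuous_re.tendsto 0).comp hF_lim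

/-- For a finite continuous (atomless) Borel measure `μ` on the unit circle, there is a
set `A ⊆ ℕ` of density 1 along which the Fourier coefficients `μ̂(k) = ∫ z^k dμ` tend
to `0`. -/
theorem stmt1 (μ : Measure Circle) [IsFiniteMeasure μ]
    (hcont : ∀ z : Circle, μ {z} = 0) :
    ∃ A : Set ℕ, HasDensityOne A ∧
      Tendsto (fun k : ℕ => ∫ z : Circle, (z : ℂ) ^ k ∂μ) (atTop ⊓ 𝓟 A) (nhds 0) := by
  have : NullSingletonClass μ := ⟨hcont⟩
  obtain ⟨A, hA, hsq⟩ := exists_hasDensityOne_tendsto_zero_of_cesaro (fun _ => sq_nonneg _)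
    (Circle.tendsto_cesaro_norm_sq_integral_pow μ)
  refine ⟨A, hA, tendsto_zero_iff_norm_tendsto_zero.2 ?_⟩
  simpa only [Real.sqrt_sq (norm_nonneg _), Real.sqrt_zero] using hsq.sqrt
end

section
/- (Wiener's lemma) For a finite Borel measure μ on the unit circle, the Cesàro averages (1/n) ∑_{k=0}^{n-1} |μ̂(k)|² converge to 0 as n → ∞ if and only if μ is continuous (atomless). -/
open MeasureTheory Filter

/-!
Since `|μ̂(k)|² = ∫∫ (z⁻¹ w)ᵏ dμ(z) dμ(w)`, the Cesàro average of `|μ̂(k)|²` is the integral over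
`μ ⊗ μ` of the Cesàro means of the powers of `z⁻¹ w`. These are bounded by `1` and tend to the
indicator of the diagonal (the geometric sums of `u ≠ 1` with `|u| = 1` stay bounded), so by dominated
convergence the averages tend to `(μ ⊗ μ)(diagonal) = ∫ μ{z} dμ(z)`, which vanishes iff `μ` has
no atoms.
-/

open Set Topology
open scoped ComplexConjugate

lemma tendsto_inv_mul_geom_sum_of_norm_le_one {𝕜 : Type*} [RCLike 𝕜] {u : 𝕜}
    (hu : ‖u‖ ≤ 1) (hu₁ : u ≠ 1) :
    Tendsto (fun n : ℕ => (n : 𝕜)⁻¹ * ∑ k ∈ Finset.range n, u ^ k) atTop (𝓝 0) := by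
  have hgeom (n : ℕ) : ‖∑ k ∈ Finset.range n, u ^ k‖ ≤ 2 / ‖u - 1‖ := by
    rw [geom_sum_eq hu₁, norm_div]
    gcongr
    calc ‖u ^ n - 1‖ ≤ ‖u ^ n‖ + ‖(1 : 𝕜)‖ := norm_sub_le _ _
      _ ≤ 2 := by rw [norm_pow, norm_one]; linarith [pow_le_one₀ (norm_nonneg u) hu (n := n)]
  refine squeeze_zero_norm (fun n => ?_)
    ((tendsto_inv_atTop_nhds_zero_nat (𝕜 := ℝ)).mul_const (2 / ‖u - 1‖) |>.trans (by simp))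
  rw [norm_mul, norm_inv, RCLike.norm_natCast]
  exact mul_le_mul_of_nonneg_left (hgeom n) (by positivity)

namespace MeasureTheory.Measure

variable {α : Type*} [MeasurableSpace α] [MeasurableEq α]

lemma prod_diagonal_eq_lintegral (μ ν : Measure α) [SFinite ν] :
    (μ.prod ν) (diagonal α) = ∫⁻ x, ν {x} ∂μ := by
  rw [prod_apply measurableSet_diagonal]
  congr! with x
  ext y
  simp [eq_comm]

lemma prod_self_diagonal_eq_zero_iff (μ : Measure α) [SFinite μ] :
    (μ.prod μ) (diagonal α) = 0 ↔ ∀ x, μ {x} = 0 := by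
  rw [prod_diagonal_eq_lintegral]
  refine ⟨fun h x => ?_, fun h => by simp [h]⟩
  have hx : μ {x} * μ {x} ≤ ∫⁻ y, μ {y} ∂μ :=
    lintegral_singleton (fun y => μ {y}) x ▸ setLIntegral_le_lintegral _ _
  rwa [h, nonpos_iff_eq_zero, mul_self_eq_zero] at hx

end MeasureTheory.Measure

namespace Circle

noncomputable def cesaroPowers (n : ℕ) (z : Circle) : ℂ :=
  (n : ℂ)⁻¹ * ∑ k ∈ Finset.range n, (z : ℂ) ^ k

lemma continuous_cesaroPowers (n : ℕ) : Continuous (cesaroPowers n) := by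
  unfold cesaroPowers
  fun_prop

lemma norm_cesaroPowers_le_one (n : ℕ) (z : Circle) : ‖cesaroPowers n z‖ ≤ 1 := by
  rcases n.eq_zero_or_pos with rfl | hn
  · simp [cesaroPowers]
  calc ‖cesaroPowers n z‖ ≤ ‖(n : ℂ)⁻¹‖ * ∑ k ∈ Finset.range n, ‖(z : ℂ) ^ k‖ := by
        rw [cesaroPowers, norm_mul]
        gcongr
        exact norm_sum_le _ _
    _ = 1 := by simp [norm_pow, Circle.norm_coe, hn.ne']

lemma tendsto_cesaroPowers (z : Circle) :
    Tendsto (fun n => cesaroPowers n z) atTop (𝓝 (({1} : Set Circle).indicator 1 z)) := by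
  by_cases hz : z = 1
  · subst hz
    refine tendsto_const_nhds.congr' ?_
    filter_upwards [eventually_ne_atTop 0] with n hn
    simp [cesaroPowers, hn]
  · rw [indicator_of_notMem (show z ∉ ({1} : Set Circle) from hz)]
    exact tendsto_inv_mul_geom_sum_of_norm_le_one (Circle.norm_coe z).le
      (Circle.coe_eq_one.not.mpr hz)

lemma integral_prod_inv_mul_pow (μ : Measure Circle) [SFinite μ] (k : ℕ) :
    ∫ p : Circle × Circle, ((p.1⁻¹ * p.2 : Circle) : ℂ) ^ k ∂(μ.prod μ) =
      ‖∫ z : Circle, (z : ℂ) ^ k ∂μ‖ ^ 2 := by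
  simp_rw [Circle.coe_mul, Circle.coe_inv_eq_conj, mul_pow, ← map_pow]
  rw [integral_prod_mul (fun z : Circle => conj ((z : ℂ) ^ k)) (fun z : Circle => (z : ℂ) ^ k),
    integral_conj, Complex.conj_mul']

lemma integral_cesaroPowers_inv_mul (μ : Measure Circle) [IsFiniteMeasure μ] (n : ℕ) :
    ∫ p : Circle × Circle, cesaroPowers n (p.1⁻¹ * p.2) ∂(μ.prod μ) =
      ((1 / (n : ℝ) * ∑ k ∈ Finset.range n, ‖∫ z : Circle, (z : ℂ) ^ k ∂μ‖ ^ 2 : ℝ) : ℂ) := by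
  have hint (k : ℕ) : Integrable (fun p : Circle × Circle => ((p.1⁻¹ * p.2 : Circle) : ℂ) ^ k)
      (μ.prod μ) :=
    Continuous.integrable_of_hasCompactSupport (by fun_prop) (.of_compactSpace _)
  simp_rw [cesaroPowers]
  rw [integral_const_mul, integral_finsetSum _ fun k _ => hint k]
  simp_rw [integral_prod_inv_mul_pow]
  push_cast
  ring

theorem tendsto_cesaro_norm_sq_fourier (μ : Measure Circle) [IsFiniteMeasure μ] :
    Tendsto (fun n : ℕ => 1 / (n : ℝ) * ∑ k ∈ Finset.range n, ‖∫ z : Circle, (z : ℂ) ^ k ∂μ‖ ^ 2)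
      atTop (𝓝 ((μ.prod μ).real (diagonal Circle))) := by
  have hdiag (p : Circle × Circle) : ({1} : Set Circle).indicator 1 (p.1⁻¹ * p.2) =
      (diagonal Circle).indicator (fun _ => (1 : ℂ)) p := by
    by_cases h : p.1 = p.2
    · simp [h]
    · simp [h, inv_mul_eq_one]
  have hdominated := tendsto_integral_of_dominated_convergence (μ := μ.prod μ)
    (F := fun n p => cesaroPowers n (p.1⁻¹ * p.2)) (fun _ => 1)
    (fun n => ((continuous_cesaroPowers n).comp (by fun_prop)).aestronglyMeasurable)
    (integrable_const 1) (fun n => .of_forall fun p => norm_cesaroPowers_le_one n _)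
    (.of_forall fun p => tendsto_cesaroPowers _)
  rw [← tendsto_ofReal_iff]
  simpa [integral_cesaroPowers_inv_mul, hdiag, integral_indicator_const _ measurableSet_diagonal]
    using hdominated

end Circle

/-- Wiener's lemma: for a finite Borel measure `μ` on the unit circle, the Cesàro
averages `(1/n) ∑_{k<n} |μ̂(k)|²` tend to `0` iff `μ` is continuous (atomless). -/
theorem stmt2 (μ : Measure Circle) [IsFiniteMeasure μ] :
    Tendsto
      (fun n : ℕ => (1 / (n : ℝ)) * ∑ k ∈ Finset.range n, ‖∫ z : Circle, (z : ℂ) ^ k ∂μ‖ ^ 2)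
      atTop (nhds 0)
    ↔ ∀ z : Circle, μ {z} = 0 := by
  have hlim := Circle.tendsto_cesaro_norm_sq_fourier μ
  rw [← Measure.prod_self_diagonal_eq_zero_iff, ← measureReal_eq_zero_iff]
  exact ⟨fun h => (tendsto_nhds_unique h hlim).symm, fun h => h ▸ hlim⟩
end

section
/- If two finite Borel measures μ and ν on the unit circle and a sequence of natural numbers (n_i) satisfy: z^{n_i} → 1 in L²(ν), and ∫ z^{n_i} f dμ → 0 for every bounded measurable f, then μ and ν are mutually singular. -/
/-!
Let `τ = min (dν/dμ) 1 • μ`. Then `τ ≤ ν`, so `z ^ n i → 1` in `L²(τ)`, while `τ` has a bounded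
density with respect to `μ`, so `∫ z ^ n i dτ → 0`. Since `‖w - 1‖² = 2 - 2 Re w` for `‖w‖ = 1`,
the two limits give `2 τ(𝕋) = 0`; hence `dν/dμ = 0` `μ`-a.e., i.e. `ν ⟂ₘ μ`.
-/

open MeasureTheory Filter

open Topology

lemma Complex.sq_norm_sub_one_of_norm_eq_one {w : ℂ} (hw : ‖w‖ = 1) :
    ‖w - 1‖ ^ 2 = 2 - 2 * w.re := by
  rw [Complex.sq_norm, Complex.normSq_sub, ← Complex.sq_norm, hw]
  simp only [map_one, mul_one]
  ring

namespace MeasureTheory.Measure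

variable {X : Type*} [MeasurableSpace X]

lemma eq_zero_of_tendsto_integral_of_norm_eq_one {ι : Type*} {l : Filter ι} [l.NeBot]
    {τ : Measure X} [IsFiniteMeasure τ] {u : ι → X → ℂ}
    (hu_meas : ∀ i, AEStronglyMeasurable (u i) τ) (hu : ∀ i x, ‖u i x‖ = 1)
    (h_sq : Tendsto (fun i => ∫ x, ‖u i x - 1‖ ^ 2 ∂τ) l (𝓝 0))
    (h_int : Tendsto (fun i => ∫ x, u i x ∂τ) l (𝓝 0)) :
    τ = 0 := by
  have h_eq : ∀ i, ∫ x, ‖u i x - 1‖ ^ 2 ∂τ = 2 * τ.real Set.univ - 2 * (∫ x, u i x ∂τ).re := by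
    intro i
    have hui : Integrable (u i) τ :=
      .of_bound (hu_meas i) 1 (.of_forall fun x => (hu i x).le)
    simp_rw [Complex.sq_norm_sub_one_of_norm_eq_one (hu i _)]
    have hui_re : Integrable (fun x => (u i x).re) τ := hui.re
    rw [integral_sub (integrable_const 2) (hui_re.const_mul 2), integral_const_mul]
    have h_re : ∫ x, (u i x).re ∂τ = (∫ x, u i x ∂τ).re := integral_re hui
    simp [h_re, mul_comm]
  have h_lim : Tendsto (fun i => ∫ x, ‖u i x - 1‖ ^ 2 ∂τ) l (𝓝 (2 * τ.real Set.univ)) := by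
    simp_rw [h_eq]
    simpa using tendsto_const_nhds.sub (((Complex.continuous_re.tendsto 0).comp h_int).const_mul 2)
  have : τ.real Set.univ = 0 := by linarith [tendsto_nhds_unique h_lim h_sq]
  exact measure_univ_eq_zero.1 ((measureReal_eq_zero_iff).1 this)

lemma withDensity_min_rnDeriv_one_le (μ ν : Measure X) :
    μ.withDensity (fun x => min (ν.rnDeriv μ x) 1) ≤ ν :=
  (withDensity_mono (.of_forall fun _ => min_le_left _ _)).trans (withDensity_rnDeriv_le ν μ)

lemma mutuallySingular_of_withDensity_min_rnDeriv_one_eq_zero {μ ν : Measure X}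
    [ν.HaveLebesgueDecomposition μ]
    (h : μ.withDensity (fun x => min (ν.rnDeriv μ x) 1) = 0) : ν ⟂ₘ μ := by
  rw [withDensity_eq_zero_iff ((measurable_rnDeriv ν μ).min measurable_const).aemeasurable] at h
  rw [← rnDeriv_eq_zero]
  filter_upwards [h] with x hx
  simpa using hx

end MeasureTheory.Measure

/-- If finite Borel measures `μ, ν` on the unit circle and a sequence `(n i)` satisfy
`z^{n i} → 1` in `L²(ν)` and `∫ z^{n i} f dμ → 0` for every bounded measurable `f`,
then `μ` and `ν` are mutually singular. -/
theorem stmt3 (μ ν : Measure Circle) [IsFiniteMeasure μ] [IsFiniteMeasure ν]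
    (n : ℕ → ℕ)
    (hν : Tendsto (fun i => ∫ z : Circle, ‖(z : ℂ) ^ (n i) - 1‖ ^ 2 ∂ν) atTop (nhds 0))
    (hμ : ∀ f : Circle → ℂ, Measurable f → (∃ M : ℝ, ∀ z, ‖f z‖ ≤ M) →
      Tendsto (fun i => ∫ z : Circle, (z : ℂ) ^ (n i) * f z ∂μ) atTop (nhds 0)) :
    μ ⟂ₘ ν := by
  set g := fun z => min (ν.rnDeriv μ z) 1
  have hg : Measurable g := (Measure.measurable_rnDeriv ν μ).min measurable_const
  set τ := μ.withDensity g
  have hτν : τ ≤ ν := μ.withDensity_min_rnDeriv_one_le ν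
  have : IsFiniteMeasure τ := isFiniteMeasure_of_le ν hτν
  have h_int : Tendsto (fun i => ∫ z, (z : ℂ) ^ (n i) ∂τ) atTop (𝓝 0) := by
    have hg_bdd : ∀ z, ‖((g z).toReal : ℂ)‖ ≤ 1 := fun z => by
      simpa using ENNReal.toReal_mono ENNReal.one_ne_top (min_le_right _ 1)
    convert hμ _ (Complex.measurable_ofReal.comp hg.ennreal_toReal) ⟨1, hg_bdd⟩ using 2 with i
    rw [integral_withDensity_eq_integral_toReal_smul hg
      (.of_forall fun z => (min_le_right _ 1).trans_lt ENNReal.one_lt_top)]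
    simp_rw [Complex.real_smul, mul_comm, Function.comp_apply]
  have h_sq : Tendsto (fun i => ∫ z, ‖(z : ℂ) ^ (n i) - 1‖ ^ 2 ∂τ) atTop (𝓝 0) := by
    refine tendsto_of_tendsto_of_tendsto_of_le_of_le tendsto_const_nhds hν
      (fun i => integral_nonneg fun z => by positivity) fun i => ?_
    exact integral_mono_measure hτν (.of_forall fun z => by positivity)
      ((by fun_prop : Continuous _).integrable_of_hasCompactSupport
        (HasCompactSupport.of_compactSpace _))
  refine (Measure.mutuallySingular_of_withDensity_min_rnDeriv_one_eq_zero ?_).symm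
  exact Measure.eq_zero_of_tendsto_integral_of_norm_eq_one (fun i => by fun_prop)
    (fun i z => by simp [Circle.norm_coe]) h_sq h_int
end

section
/- If μ and ν are Borel probability measures on the unit circle and there exists a sequence (n_i) such that z^{n_i} converges weakly in L²(μ) to f and weakly in L²(ν) to g, with f(z) ≠ g(z) for all z in the circle, then μ and ν are mutually singular. -/
/-!
Let `a` and `b` be the densities of `μ` and `ν` with respect to `μ + ν`. Pairing `z ^ nᵢ` with
the test function `b · 1ₛ` in `L²(μ)` and with `a · 1ₛ` in `L²(ν)` gives the same number
`∫ₛ a b zⁿⁱ d(μ + ν)`, so the two weak limits satisfy `∫ₛ a b f d(μ + ν) = ∫ₛ a b g d(μ + ν)` for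
every measurable `s`. Hence `a b (f - g) = 0` almost everywhere, and as `f ≠ g` everywhere,
`a b = 0`: `μ` lives on `{b = 0}` and `ν` on `{b ≠ 0}`.
-/

open MeasureTheory Filter Complex

open scoped Topology

namespace MeasureTheory.Measure

variable {α : Type*} [MeasurableSpace α] {μ ν : Measure α}

lemma setIntegral_toReal_rnDeriv_add_smul_comm [SigmaFinite μ] [SigmaFinite ν]
    {E : Type*} [NormedAddCommGroup E] [NormedSpace ℝ E] (F : α → E) {s : Set α}
    (hs : MeasurableSet s) :
    ∫ x in s, (ν.rnDeriv (μ + ν) x).toReal • F x ∂μ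
      = ∫ x in s, (μ.rnDeriv (μ + ν) x).toReal • F x ∂ν := by
  rw [← setIntegral_rnDeriv_smul (μ := μ) ((AbsolutelyContinuous.refl _).add_right ν) hs,
    ← setIntegral_rnDeriv_smul (μ := ν) ((AbsolutelyContinuous.refl _).add_right' μ) hs]
  simp only [smul_smul, mul_comm]

lemma memLp_toReal_rnDeriv_of_le [IsFiniteMeasure μ] {ρ : Measure α} [SigmaFinite ρ]
    (hνρ : ν ≤ ρ) (hμρ : μ ≪ ρ) (p : ENNReal) :
    MemLp (fun x => (ν.rnDeriv ρ x).toReal) p μ := by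
  refine MemLp.of_bound (measurable_rnDeriv ν ρ).ennreal_toReal.aestronglyMeasurable 1 ?_
  filter_upwards [hμρ.ae_le (rnDeriv_le_one_of_le hνρ)] with x hx
  rw [Real.norm_eq_abs, abs_of_nonneg ENNReal.toReal_nonneg]
  exact ENNReal.toReal_le_of_le_ofReal zero_le_one (by simpa using hx)

lemma mutuallySingular_of_toReal_rnDeriv_add_mul_ae_eq_zero [SigmaFinite μ] [SigmaFinite ν]
    (h : ∀ᵐ x ∂(μ + ν), (μ.rnDeriv (μ + ν) x).toReal * (ν.rnDeriv (μ + ν) x).toReal = 0) :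
    μ ⟂ₘ ν := by
  have hμ : μ ≪ μ + ν := (AbsolutelyContinuous.refl _).add_right ν
  have hν : ν ≪ μ + ν := (AbsolutelyContinuous.refl _).add_right' μ
  rw [mutuallySingular_iff_disjoint_ae, Filter.disjoint_iff]
  refine ⟨{x | (ν.rnDeriv (μ + ν) x).toReal = 0}, ?_, {x | (ν.rnDeriv (μ + ν) x).toReal ≠ 0}, ?_,
    Set.disjoint_left.2 fun x hx hx' => hx' hx⟩
  · filter_upwards [hμ.ae_le h, rnDeriv_pos hμ, hμ.ae_le (rnDeriv_lt_top μ (μ + ν))]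
      with x hx hpos hlt
    exact (mul_eq_zero.1 hx).resolve_left (ENNReal.toReal_pos hpos.ne' hlt.ne).ne'
  · filter_upwards [rnDeriv_pos hν, hν.ae_le (rnDeriv_lt_top ν (μ + ν))] with x hpos hlt
    exact (ENNReal.toReal_pos hpos.ne' hlt.ne).ne'

lemma integral_mul_conj_indicator_ofReal (F : α → ℂ) (c : α → ℝ) {s : Set α}
    (hs : MeasurableSet s) :
    ∫ x, F x * starRingEnd ℂ (s.indicator (fun y => (c y : ℂ)) x) ∂μ = ∫ x in s, c x • F x ∂μ := by
  rw [← integral_indicator hs]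
  congr 1 with x
  by_cases hx : x ∈ s <;> simp [hx, Complex.real_smul, mul_comm]

section WeakLimits

variable [IsFiniteMeasure μ] [IsFiniteMeasure ν] {ι : Type*} {l : Filter ι} [l.NeBot]
  {φ : ι → α → ℂ} {f g : α → ℂ}

lemma setIntegral_toReal_rnDeriv_add_smul_eq_of_tendsto
    (hμw : ∀ h : α → ℂ, MemLp h 2 μ →
      Tendsto (fun i => ∫ x, φ i x * starRingEnd ℂ (h x) ∂μ) l
        (𝓝 (∫ x, f x * starRingEnd ℂ (h x) ∂μ)))
    (hνw : ∀ h : α → ℂ, MemLp h 2 ν →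
      Tendsto (fun i => ∫ x, φ i x * starRingEnd ℂ (h x) ∂ν) l
        (𝓝 (∫ x, g x * starRingEnd ℂ (h x) ∂ν)))
    {s : Set α} (hs : MeasurableSet s) :
    ∫ x in s, (ν.rnDeriv (μ + ν) x).toReal • f x ∂μ
      = ∫ x in s, (μ.rnDeriv (μ + ν) x).toReal • g x ∂ν := by
  have hμ_test := hμw (s.indicator fun x => ((ν.rnDeriv (μ + ν) x).toReal : ℂ))
    ((memLp_toReal_rnDeriv_of_le (Measure.le_add_left le_rfl)
      ((AbsolutelyContinuous.refl _).add_right ν) 2).ofReal.indicator hs)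
  have hν_test := hνw (s.indicator fun x => ((μ.rnDeriv (μ + ν) x).toReal : ℂ))
    ((memLp_toReal_rnDeriv_of_le (Measure.le_add_right le_rfl)
      ((AbsolutelyContinuous.refl _).add_right' μ) 2).ofReal.indicator hs)
  simp only [integral_mul_conj_indicator_ofReal _ _ hs] at hμ_test hν_test
  simp only [setIntegral_toReal_rnDeriv_add_smul_comm (φ _) hs] at hμ_test
  exact tendsto_nhds_unique hμ_test hν_test

theorem mutuallySingular_of_tendsto_of_ne (hf : Integrable f μ) (hg : Integrable g ν)
    (hμw : ∀ h : α → ℂ, MemLp h 2 μ →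
      Tendsto (fun i => ∫ x, φ i x * starRingEnd ℂ (h x) ∂μ) l
        (𝓝 (∫ x, f x * starRingEnd ℂ (h x) ∂μ)))
    (hνw : ∀ h : α → ℂ, MemLp h 2 ν →
      Tendsto (fun i => ∫ x, φ i x * starRingEnd ℂ (h x) ∂ν) l
        (𝓝 (∫ x, g x * starRingEnd ℂ (h x) ∂ν)))
    (hfg : ∀ x, f x ≠ g x) :
    μ ⟂ₘ ν := by
  set a := fun x => (μ.rnDeriv (μ + ν) x).toReal
  set b := fun x => (ν.rnDeriv (μ + ν) x).toReal
  have hμ : μ ≪ μ + ν := (AbsolutelyContinuous.refl _).add_right ν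
  have hν : ν ≪ μ + ν := (AbsolutelyContinuous.refl _).add_right' μ
  have hbf : Integrable (fun x => b x • f x) μ :=
    hf.smul_of_top_right (memLp_toReal_rnDeriv_of_le (Measure.le_add_left le_rfl) hμ ⊤)
  have hag : Integrable (fun x => a x • g x) ν :=
    hg.smul_of_top_right (memLp_toReal_rnDeriv_of_le (Measure.le_add_right le_rfl) hν ⊤)
  have habfg : (fun x => a x • b x • f x) =ᵐ[μ + ν] fun x => b x • a x • g x := by
    refine Integrable.ae_eq_of_forall_setIntegral_eq _ _ ((integrable_rnDeriv_smul_iff hμ).2 hbf)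
      ((integrable_rnDeriv_smul_iff hν).2 hag) fun s hs _ => ?_
    rw [setIntegral_rnDeriv_smul hμ hs, setIntegral_rnDeriv_smul hν hs]
    exact setIntegral_toReal_rnDeriv_add_smul_eq_of_tendsto hμw hνw hs
  refine mutuallySingular_of_toReal_rnDeriv_add_mul_ae_eq_zero ?_
  filter_upwards [habfg] with x hx
  rw [smul_smul, smul_smul, mul_comm (b x), ← sub_eq_zero, ← smul_sub, smul_eq_zero] at hx
  exact hx.resolve_right (sub_ne_zero.2 (hfg x))

end WeakLimits

end MeasureTheory.Measure

/-- If `μ` and `ν` are Borel probability measures on the unit circle and `z^{n i}`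
converges weakly in `L²(μ)` to `f` and weakly in `L²(ν)` to `g`, with `f z ≠ g z`
for all `z`, then `μ` and `ν` are mutually singular. -/
theorem stmt4 (μ ν : Measure Circle) [IsProbabilityMeasure μ] [IsProbabilityMeasure ν]
    (n : ℕ → ℕ) (f g : Circle → ℂ) (hf : MemLp f 2 μ) (hg : MemLp g 2 ν)
    (hμw : ∀ h : Circle → ℂ, MemLp h 2 μ →
      Tendsto (fun i => ∫ z : Circle, (z : ℂ) ^ (n i) * (starRingEnd ℂ) (h z) ∂μ) atTop
        (nhds (∫ z : Circle, f z * (starRingEnd ℂ) (h z) ∂μ)))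
    (hνw : ∀ h : Circle → ℂ, MemLp h 2 ν →
      Tendsto (fun i => ∫ z : Circle, (z : ℂ) ^ (n i) * (starRingEnd ℂ) (h z) ∂ν) atTop
        (nhds (∫ z : Circle, g z * (starRingEnd ℂ) (h z) ∂ν)))
    (hfg : ∀ z : Circle, f z ≠ g z) :
    μ ⟂ₘ ν :=
  Measure.mutuallySingular_of_tendsto_of_ne (hf.integrable one_le_two) (hg.integrable one_le_two)
    hμw hνw hfg
end

section
/- Let T and S be ergodic invertible measure-preserving transformations. Suppose there is a sequence (n_i) such that (n_i) is a rigidity sequence for S and a mixing sequence for T (so that for mean-zero f, g: ∫ z^{n_i+k} dσ_{f,T} → 0 for all k while z^{n_i} → 1 in L²(σ_{g,S})). Then for all mean-zero f, g ∈ L², the spectral measures σ_{f,T} and σ_{g,S} are mutually singular. -/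
open MeasureTheory Filter

/-- `σ` is the spectral measure of `g` for the invertible transformation `e`:
`∫ z^k dσ = ⟨g, U^k g⟩` for all `k ∈ ℤ`. -/
def IsSpectralMeasure {X : Type*} [MeasurableSpace X] (e : X ≃ᵐ X) (μ : Measure X)
    (g : X → ℂ) (σ : Measure Circle) : Prop :=
  ∀ k : ℕ, (∫ z : Circle, (z : ℂ) ^ (k : ℤ) ∂σ =
      ∫ x, (starRingEnd ℂ) (g x) * g ((⇑e)^[k] x) ∂μ) ∧
    ∫ z : Circle, (z : ℂ) ^ (-(k : ℤ)) ∂σ =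
      ∫ x, (starRingEnd ℂ) (g x) * g ((⇑e.symm)^[k] x) ∂μ

/-!
Let `ρ` be the part of `σ_g` that is absolutely continuous with respect to `σ_f`. As `ρ ≤ σ_g`,
rigidity gives `Re ρ̂(n i) = ρ(𝕋) - ½ ∫ |z^{n i} - 1|² dρ → ρ(𝕋)`. As `ρ = h σ_f` with
`h ∈ L¹(σ_f)`, and trigonometric polynomials are dense in `L¹(σ_f)`, mixing gives
`ρ̂(n i) = ∫ h z^{n i} dσ_f → 0`. Hence `ρ = 0`, that is, `σ_g ⟂ σ_f`.
-/

open Set Submodule Topology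
open scoped NNReal

section L1

variable {α : Type*} [MeasurableSpace α] {σ : Measure α}

lemma lipschitzWith_integral_mul_Lp_one {φ : α → ℂ} {C : ℝ≥0}
    (hφm : AEStronglyMeasurable φ σ) (hφ : ∀ x, ‖φ x‖ ≤ C) :
    LipschitzWith C fun u : Lp ℂ 1 σ => ∫ x, u x * φ x ∂σ := by
  refine LipschitzWith.of_dist_le_mul fun u v => ?_
  have hint (u : Lp ℂ 1 σ) : Integrable (fun x => u x * φ x) σ :=
    (L1.integrable_coeFn u).mul_bdd hφm (Eventually.of_forall hφ)
  rw [dist_eq_norm, dist_eq_norm, ← integral_sub (hint u) (hint v), L1.norm_eq_integral_norm,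
    ← integral_const_mul]
  refine norm_integral_le_of_norm_le ((L1.integrable_coeFn _).norm.const_mul _) ?_
  filter_upwards [Lp.coeFn_sub u v] with x hx
  rw [hx, Pi.sub_apply, ← sub_mul, norm_mul, mul_comm]
  exact mul_le_mul_of_nonneg_right (hφ x) (norm_nonneg _)

variable [TopologicalSpace α] [CompactSpace α] [IsFiniteMeasure σ]

lemma Continuous.integrable_of_compactSpace [OpensMeasurableSpace α] {E : Type*}
    [NormedAddCommGroup E] {f : α → E} (hf : Continuous f) : Integrable f σ :=
  hf.integrable_of_hasCompactSupport (.of_compactSpace f)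

variable {ι : Type*} {l : Filter ι} {φ : ι → α → ℂ} {C : ℝ≥0}

lemma tendsto_integral_mul_of_mem_span [OpensMeasurableSpace α]
    (hφm : ∀ i, AEStronglyMeasurable (φ i) σ) (hφ : ∀ i x, ‖φ i x‖ ≤ C) {s : Set C(α, ℂ)}
    (h : ∀ p ∈ s, Tendsto (fun i => ∫ x, p x * φ i x ∂σ) l (𝓝 0))
    {p : C(α, ℂ)} (hp : p ∈ span ℂ s) : Tendsto (fun i => ∫ x, p x * φ i x ∂σ) l (𝓝 0) := by
  have hint (p : C(α, ℂ)) (i : ι) : Integrable (fun x => p x * φ i x) σ :=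
    p.continuous.integrable_of_compactSpace.mul_bdd (hφm i) (Eventually.of_forall (hφ i))
  induction hp using span_induction with
  | mem p hp => exact h p hp
  | zero => simpa using tendsto_const_nhds
  | add p q _ _ hp hq =>
    simpa only [ContinuousMap.add_apply, add_mul, integral_add (hint p _) (hint q _), add_zero]
      using hp.add hq
  | smul c p _ hp =>
    simpa only [ContinuousMap.smul_apply, smul_eq_mul, mul_assoc, integral_const_mul, mul_zero]
      using hp.const_mul c

theorem tendsto_integral_mul_of_dense_span [NormalSpace α] [BorelSpace α] [σ.WeaklyRegular]
    {s : Set C(α, ℂ)} (hs : (span ℂ s).topologicalClosure = ⊤)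
    (hφm : ∀ i, AEStronglyMeasurable (φ i) σ) (hφ : ∀ i x, ‖φ i x‖ ≤ C)
    (h : ∀ p ∈ s, Tendsto (fun i => ∫ x, p x * φ i x ∂σ) l (𝓝 0))
    {w : α → ℂ} (hw : Integrable w σ) : Tendsto (fun i => ∫ x, w x * φ i x ∂σ) l (𝓝 0) := by
  set A : Set (Lp ℂ 1 σ) := {u | Tendsto (fun i => ∫ x, u x * φ i x ∂σ) l (𝓝 0)}
  have hA : IsClosed A :=
    (LipschitzWith.uniformEquicontinuous _ C fun i =>
      lipschitzWith_integral_mul_Lp_one (hφm i) (hφ i)).equicontinuous.isClosed_setOfPred_tendsto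
      continuous_const
  have hdense : Dense (ContinuousMap.toLp (E := ℂ) 1 σ ℂ '' span ℂ s) :=
    (ContinuousMap.toLp_denseRange ℂ σ ℂ ENNReal.one_ne_top).dense_image
      (ContinuousMap.toLp (E := ℂ) 1 σ ℂ).continuous (dense_iff_topologicalClosure_eq_top.mpr hs)
  have hsub : ContinuousMap.toLp (E := ℂ) 1 σ ℂ '' span ℂ s ⊆ A := by
    rintro - ⟨p, hp, rfl⟩
    refine (tendsto_integral_mul_of_mem_span hφm hφ h hp).congr fun i => integral_congr_ae ?_
    filter_upwards [ContinuousMap.coeFn_toLp (p := 1) (𝕜 := ℂ) σ p] with x hx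
    rw [hx]
  have hwA : hw.toL1 w ∈ A := hA.closure_subset_iff.mpr hsub (hdense.closure_eq ▸ mem_univ _)
  refine hwA.congr fun i => integral_congr_ae ?_
  filter_upwards [hw.coeFn_toL1] with x hx
  rw [hx]

end L1

section Circle

noncomputable def circleChar (k : ℤ) : C(Circle, ℂ) :=
  ⟨fun z => (z : ℂ) ^ k, continuous_subtype_val.zpow₀ k fun z => .inl (Circle.coe_ne_zero z)⟩

lemma circleChar_apply (k : ℤ) (z : Circle) : circleChar k z = (z : ℂ) ^ k := rfl

lemma circleChar_add (m k : ℤ) : circleChar (m + k) = circleChar m * circleChar k := by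
  ext z
  simp [circleChar_apply, zpow_add₀ (Circle.coe_ne_zero z)]

lemma star_circleChar (k : ℤ) : star (circleChar k) = circleChar (-k) := by
  ext z
  simp [circleChar_apply, ← Circle.coe_inv_eq_conj, inv_zpow']

noncomputable def circleCharSubalgebra : StarSubalgebra ℂ C(Circle, ℂ) where
  toSubalgebra := Algebra.adjoin ℂ (range circleChar)
  star_mem' := by
    show Algebra.adjoin ℂ (range circleChar) ≤ star (Algebra.adjoin ℂ (range circleChar))
    refine Algebra.adjoin_le ?_
    rintro - ⟨k, rfl⟩
    exact Algebra.subset_adjoin ⟨-k, (star_circleChar k).symm⟩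

lemma circleCharSubalgebra_toSubmodule :
    Subalgebra.toSubmodule circleCharSubalgebra.toSubalgebra = span ℂ (range circleChar) := by
  apply Algebra.adjoin_eq_span_of_subset
  refine Subset.trans (fun x hx => ?_) subset_span
  refine Submonoid.closure_induction (fun _ => id) ⟨0, by ext; simp [circleChar_apply]⟩ ?_ hx
  rintro - - - - ⟨m, rfl⟩ ⟨k, rfl⟩
  exact ⟨m + k, circleChar_add m k⟩

lemma circleCharSubalgebra_separatesPoints : circleCharSubalgebra.SeparatesPoints := by
  intro x y hxy
  refine ⟨_, ⟨circleChar 1, Algebra.subset_adjoin ⟨1, rfl⟩, rfl⟩, ?_⟩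
  simpa [circleChar_apply, Circle.coe_inj] using hxy

theorem span_circleChar_closure_eq_top : (span ℂ (range circleChar)).topologicalClosure = ⊤ := by
  rw [← circleCharSubalgebra_toSubmodule]
  exact congr_arg (Subalgebra.toSubmodule <| StarSubalgebra.toSubalgebra ·)
    (ContinuousMap.starSubalgebra_topologicalClosure_eq_top_of_separatesPoints _
      circleCharSubalgebra_separatesPoints)

variable {ι : Type*} {l : Filter ι} {n : ι → ℕ}

theorem tendsto_integral_mul_pow_of_tendsto_integral_zpow {σ : Measure Circle}
    [IsFiniteMeasure σ]
    (hmix : ∀ k : ℤ, Tendsto (fun i => ∫ z : Circle, (z : ℂ) ^ ((n i : ℤ) + k) ∂σ) l (𝓝 0))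
    {w : Circle → ℂ} (hw : Integrable w σ) :
    Tendsto (fun i => ∫ z : Circle, w z * (z : ℂ) ^ n i ∂σ) l (𝓝 0) := by
  have hcont (i : ι) : Continuous fun z : Circle => (z : ℂ) ^ n i := continuous_subtype_val.pow _
  refine tendsto_integral_mul_of_dense_span (C := 1) span_circleChar_closure_eq_top
    (fun i => (hcont i).aestronglyMeasurable) (fun i z => by simp [Circle.norm_coe]) ?_ hw
  rintro - ⟨k, rfl⟩
  refine (hmix k).congr fun i => integral_congr_ae (Eventually.of_forall fun z => ?_)
  dsimp only
  rw [circleChar_apply, ← zpow_natCast, ← zpow_add₀ (Circle.coe_ne_zero z), add_comm]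

theorem tendsto_integral_pow_of_absolutelyContinuous {σ ρ : Measure Circle} [IsFiniteMeasure σ]
    [IsFiniteMeasure ρ]
    (hmix : ∀ k : ℤ, Tendsto (fun i => ∫ z : Circle, (z : ℂ) ^ ((n i : ℤ) + k) ∂σ) l (𝓝 0))
    (hρσ : ρ ≪ σ) : Tendsto (fun i => ∫ z : Circle, (z : ℂ) ^ n i ∂ρ) l (𝓝 0) := by
  refine (tendsto_integral_mul_pow_of_tendsto_integral_zpow hmix
    (Measure.integrable_toReal_rnDeriv (μ := ρ) (ν := σ)).ofReal).congr fun i => ?_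
  exact integral_rnDeriv_smul hρσ

lemma norm_pow_sub_one_sq (z : Circle) (m : ℕ) :
    ‖(z : ℂ) ^ m - 1‖ ^ 2 = 2 * (1 - ((z : ℂ) ^ m).re) := by
  rw [← Complex.normSq_eq_norm_sq, Complex.normSq_sub]
  simp [Complex.normSq_eq_norm_sq, Circle.norm_coe]
  ring

theorem tendsto_re_integral_pow_of_le {ρ τ : Measure Circle} [IsFiniteMeasure τ] (hρτ : ρ ≤ τ)
    (hrig : Tendsto (fun i => ∫ z : Circle, ‖(z : ℂ) ^ n i - 1‖ ^ 2 ∂τ) l (𝓝 0)) :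
    Tendsto (fun i => (∫ z : Circle, (z : ℂ) ^ n i ∂ρ).re) l (𝓝 (ρ.real univ)) := by
  have : IsFiniteMeasure ρ := isFiniteMeasure_of_le τ hρτ
  have hcont (i : ι) : Continuous fun z : Circle => (z : ℂ) ^ n i := continuous_subtype_val.pow _
  have hdefect (i : ι) : Integrable (fun z : Circle => ‖(z : ℂ) ^ n i - 1‖ ^ 2) ρ :=
    (((hcont i).sub continuous_const).norm.pow 2).integrable_of_compactSpace
  have hρrig : Tendsto (fun i => ∫ z : Circle, ‖(z : ℂ) ^ n i - 1‖ ^ 2 ∂ρ) l (𝓝 0) :=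
    squeeze_zero (fun i => integral_nonneg fun z => by positivity)
      (fun i => integral_mono_measure hρτ (.of_forall fun z => by positivity)
        ((((hcont i).sub continuous_const).norm.pow 2).integrable_of_compactSpace)) hrig
  have hre (i : ι) : (∫ z : Circle, (z : ℂ) ^ n i ∂ρ).re
      = ρ.real univ - (∫ z : Circle, ‖(z : ℂ) ^ n i - 1‖ ^ 2 ∂ρ) / 2 := by
    have hpt (z : Circle) : ((z : ℂ) ^ n i).re = 1 - ‖(z : ℂ) ^ n i - 1‖ ^ 2 / 2 := by
      linarith [norm_pow_sub_one_sq z (n i)]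
    rw [← RCLike.re_to_complex, ← integral_re (hcont i).integrable_of_compactSpace,
      integral_congr_ae (.of_forall fun z => by rw [RCLike.re_to_complex, hpt z]),
      integral_sub (integrable_const 1) ((hdefect i).div_const 2), integral_const, smul_eq_mul,
      mul_one, integral_div]
  simpa [hre] using (tendsto_const_nhds (x := ρ.real univ)).sub (hρrig.div_const 2)

theorem eq_zero_of_absolutelyContinuous_of_le [l.NeBot] {σ τ ρ : Measure Circle}
    [IsFiniteMeasure σ] [IsFiniteMeasure τ]
    (hmix : ∀ k : ℤ, Tendsto (fun i => ∫ z : Circle, (z : ℂ) ^ ((n i : ℤ) + k) ∂σ) l (𝓝 0))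
    (hrig : Tendsto (fun i => ∫ z : Circle, ‖(z : ℂ) ^ n i - 1‖ ^ 2 ∂τ) l (𝓝 0))
    (hρσ : ρ ≪ σ) (hρτ : ρ ≤ τ) : ρ = 0 := by
  have : IsFiniteMeasure ρ := isFiniteMeasure_of_le τ hρτ
  have hmixρ : Tendsto (fun i => (∫ z : Circle, (z : ℂ) ^ n i ∂ρ).re) l (𝓝 0) :=
    (Complex.continuous_re.tendsto 0).comp
      (tendsto_integral_pow_of_absolutelyContinuous hmix hρσ)
  have hmass : ρ.real univ = 0 :=
    tendsto_nhds_unique (tendsto_re_integral_pow_of_le hρτ hrig) hmixρ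
  rwa [measureReal_eq_zero_iff, Measure.measure_univ_eq_zero] at hmass

end Circle

theorem stmt19_general {X Y : Type*} [MeasurableSpace X] [MeasurableSpace Y]
    (μ : Measure X) (ν : Measure Y)
    (eT : X ≃ᵐ X) (eS : Y ≃ᵐ Y)
    (n : ℕ → ℕ)
    (hrigS : ∀ g : Y → ℂ, MemLp g 2 ν → (∫ y, g y ∂ν) = 0 →
      ∀ σ : Measure Circle, IsFiniteMeasure σ → IsSpectralMeasure eS ν g σ →
        Tendsto (fun i => ∫ z : Circle, ‖(z : ℂ) ^ (n i) - 1‖ ^ 2 ∂σ) atTop (nhds 0))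
    (hmixT : ∀ f : X → ℂ, MemLp f 2 μ → (∫ x, f x ∂μ) = 0 →
      ∀ σ : Measure Circle, IsFiniteMeasure σ → IsSpectralMeasure eT μ f σ →
        ∀ k : ℤ, Tendsto (fun i => ∫ z : Circle, (z : ℂ) ^ ((n i : ℤ) + k) ∂σ) atTop
          (nhds 0)) :
    ∀ (f : X → ℂ) (g : Y → ℂ), MemLp f 2 μ → (∫ x, f x ∂μ) = 0 →
      MemLp g 2 ν → (∫ y, g y ∂ν) = 0 →
      ∀ σf σg : Measure Circle, IsFiniteMeasure σf → IsFiniteMeasure σg →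
        IsSpectralMeasure eT μ f σf → IsSpectralMeasure eS ν g σg →
        σf ⟂ₘ σg := by
  intro f g hf hf0 hg hg0 σf σg _ _ hsf hsg
  refine ((Measure.withDensity_rnDeriv_eq_zero σg σf).mp ?_).symm
  exact eq_zero_of_absolutelyContinuous_of_le (hmixT f hf hf0 σf ‹_› hsf)
    (hrigS g hg hg0 σg ‹_› hsg) (withDensity_absolutelyContinuous _ _)
    (Measure.withDensity_rnDeriv_le σg σf)

/-- Let `T` and `S` be ergodic invertible measure-preserving transformations and `(n i)`
a sequence that is a rigidity sequence for `S` and a mixing sequence for `T`, in the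
sense that `z^{n i} → 1` in `L²(σ_{g,S})` for every mean-zero `g` while
`∫ z^{n i + k} dσ_{f,T} → 0` for every `k` and mean-zero `f`.  Then for all mean-zero
`f, g`, the spectral measures `σ_{f,T}` and `σ_{g,S}` are mutually singular. -/
theorem stmt19 {X Y : Type*} [MeasurableSpace X] [MeasurableSpace Y]
    (μ : Measure X) [IsProbabilityMeasure μ] (ν : Measure Y) [IsProbabilityMeasure ν]
    (eT : X ≃ᵐ X) (hT : MeasurePreserving ⇑eT μ μ) (hTerg : Ergodic ⇑eT μ)
    (eS : Y ≃ᵐ Y) (hS : MeasurePreserving ⇑eS ν ν) (hSerg : Ergodic ⇑eS ν)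
    (n : ℕ → ℕ)
    (hrigS : ∀ g : Y → ℂ, MemLp g 2 ν → (∫ y, g y ∂ν) = 0 →
      ∀ σ : Measure Circle, IsFiniteMeasure σ → IsSpectralMeasure eS ν g σ →
        Tendsto (fun i => ∫ z : Circle, ‖(z : ℂ) ^ (n i) - 1‖ ^ 2 ∂σ) atTop (nhds 0))
    (hmixT : ∀ f : X → ℂ, MemLp f 2 μ → (∫ x, f x ∂μ) = 0 →
      ∀ σ : Measure Circle, IsFiniteMeasure σ → IsSpectralMeasure eT μ f σ →
        ∀ k : ℤ, Tendsto (fun i => ∫ z : Circle, (z : ℂ) ^ ((n i : ℤ) + k) ∂σ) atTop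
          (nhds 0)) :
    ∀ (f : X → ℂ) (g : Y → ℂ), MemLp f 2 μ → (∫ x, f x ∂μ) = 0 →
      MemLp g 2 ν → (∫ y, g y ∂ν) = 0 →
      ∀ σf σg : Measure Circle, IsFiniteMeasure σf → IsFiniteMeasure σg →
        IsSpectralMeasure eT μ f σf → IsSpectralMeasure eS ν g σg →
        σf ⟂ₘ σg :=
  stmt19_general μ ν eT eS n hrigS hmixT
end
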